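/- With δ_j=(10+3 log₂ j)/(α j) (and δ_∞=0), the family {φ_n} is uniformly equicontinuous; precisely, for every n∈ℕ and all x,y∈X with d(x,y)≤2^{-j} one has |φ_n(x)−φ_n(y)|≤δ_j. -/
import Mathlib


open MeasureTheory Real Filter Topology

noncomputable section

namespace PhaseTransitions

/-! ### Measure-theoretic entropy and topological pressure -/

/-- Base-2 entropy of the (finite, measurable) partition of `X` induced by an
observable `f : X → F` with finitely many values. -/
def entOfObs {X F : Type*} [MeasurableSpace X] [Fintype F]
    (μ : Measure X) (f : X → F) : ℝ :=
  ∑ a : F, -((μ (f ⁻¹' {a})).toReal * Real.logb 2 (μ (f ⁻¹' {a})).toReal)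

/-- Entropy of the transformation `T` with respect to the partition induced by
the observable `f` : the limit (= infimum) of `(1/n) H(⋁_{i<n} T⁻ⁱ f)`. -/
def entObsT {X F : Type*} [MeasurableSpace X] [Fintype F]
    (T : X → X) (μ : Measure X) (f : X → F) : ℝ :=
  ⨅ n : ℕ, entOfObs μ (fun x => fun i : Fin (n + 1) => f (T^[(i : ℕ)] x)) / (n + 1)

/-- Kolmogorov–Sinai (measure-theoretic) entropy, base 2: supremum over all
finite measurable partitions (encoded by observables with values in `Fin k`). -/
def kolSinai {X : Type*} [MeasurableSpace X] (T : X → X) (μ : Measure X) : ℝ :=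
  ⨆ k : ℕ, ⨆ f : {f : X → Fin k // Measurable f}, entObsT T μ f.1

/-- `μ` is a `T`-invariant Borel probability measure. -/
def InvProb {X : Type*} [MeasurableSpace X] (T : X → X) (μ : Measure X) : Prop :=
  IsProbabilityMeasure μ ∧ MeasurePreserving T μ μ

/-- Topological pressure, via the variational principle. -/
def pressure {X : Type*} [MeasurableSpace X] (T : X → X) (φ : X → ℝ) : ℝ :=
  ⨆ μ : {μ : Measure X // InvProb T μ}, (kolSinai T μ.1 + ∫ x, φ x ∂μ.1)

/-- An equilibrium state of the potential `φ`: an invariant probability measure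
attaining the supremum in the variational principle. -/
def IsEquilibrium {X : Type*} [MeasurableSpace X] (T : X → X) (φ : X → ℝ)
    (μ : Measure X) : Prop :=
  InvProb T μ ∧ kolSinai T μ + ∫ x, φ x ∂μ = pressure T φ

/-! ### The two-sided full shift on two symbols -/

/-- The two-sided full shift space `{0,1}^ℤ`. -/
abbrev Bin : Type := ℤ → Bool

/-- The (left) shift map. -/
def shift (x : Bin) : Bin := fun n => x (n + 1)

/-- `x` is a bi-infinite free concatenation of words from `W`: there is a
bi-infinite increasing sequence of cut points, cofinal in both directions, such
that consecutive cut points delimit words of `W`. -/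
def IsFreeConcat (W : Set (List Bool)) (x : Bin) : Prop :=
  ∃ t : ℤ → ℤ, StrictMono t ∧ (∀ N : ℤ, ∃ k, N < t k) ∧ (∀ N : ℤ, ∃ k, t k < N) ∧
    ∀ k : ℤ, ∃ w ∈ W, t (k + 1) = t k + w.length ∧
      ∀ (i : ℕ) (h : i < w.length), x (t k + (i : ℤ)) = w.get ⟨i, h⟩

/-- The coded system generated by the word set `W`: the closure of the set of
free concatenations of words from `W`. -/
def codedSystem (W : Set (List Bool)) : Set Bin :=
  closure {x | IsFreeConcat W x}

/-- The generating set `W_n = {0^{2^n-1}1, 1^{2^n-1}0}`. -/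
def genWords (n : ℕ) : Set (List Bool) :=
  {List.replicate (2 ^ n - 1) false ++ [true], List.replicate (2 ^ n - 1) true ++ [false]}

/-- The subshift `X_n`, the coded system generated by `W_n`. -/
def Xsub (n : ℕ) : Set Bin := codedSystem (genWords n)

/-- The set of words of length `j` in the language of `Y ⊆ {0,1}^ℤ`. -/
def langWord (Y : Set Bin) (j : ℕ) : Set (Fin j → Bool) :=
  {w | ∃ x ∈ Y, ∀ i : Fin j, x ((i : ℕ) : ℤ) = w i}

/-! ### The metric and the potential -/

open Classical in
/-- The metric `d(x,y) = 2^{-inf{|n| : x_n ≠ y_n}}` on the shift space. -/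
def binDist (x y : Bin) : ℝ :=
  if x = y then 0
  else (1 / 2 : ℝ) ^ sInf {m : ℕ | ∃ i : ℤ, i.natAbs = m ∧ x i ≠ y i}

/-- Distance from a point to a set. -/
def distToSet (x : Bin) (S : Set Bin) : ℝ :=
  sInf ((fun y => binDist x y) '' S)

/-- `δ_j = (10 + 3 log₂ j)/(α j)`. -/
def deltaSeq (α : ℝ) (j : ℕ) : ℝ := (10 + 3 * Real.logb 2 j) / (α * j)

/-- The drop `δ` as a function of the distance `r`: if `r = 2^{-j}` this equals
`δ_j = (10 + 3 log₂ j)/(α j)`, and `δ = 0` when `r = 0` (i.e. `δ_∞ = 0`). -/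
def deltaOf (α : ℝ) (r : ℝ) : ℝ :=
  if r = 0 then 0
  else (10 + 3 * Real.logb 2 (-Real.logb 2 r)) / (α * (-Real.logb 2 r))

/-- `c_n = -∑_{j=n}^∞ 1/(2^{j+1} β_j)`. -/
def cseq (β : ℕ → ℝ) (n : ℕ) : ℝ :=
  -∑' k : ℕ, 1 / (2 ^ (n + k + 1) * β (n + k))

/-- `φ_n(x) = c_n − δ_j` when `dist(x, X_n) = 2^{-j}` (and `φ_n = c_n` on `X_n`). -/
def phiN (α : ℝ) (c : ℕ → ℝ) (n : ℕ) (x : Bin) : ℝ :=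
  c n - deltaOf α (distToSet x (Xsub n))

/-- The potential `φ = sup_{n ≥ 1} φ_n`. -/
def phi (α : ℝ) (c : ℕ → ℝ) (x : Bin) : ℝ :=
  ⨆ n : ℕ, phiN α c (n + 1) x

/-- The constants of the finite (truncated) construction:
`c_{n} = c_1 + ∑_{j=1}^{n-1} 1/(2^{j+1} β_j)`. -/
def cseqFin (c1 : ℝ) (β : ℕ → ℝ) (n : ℕ) : ℝ :=
  c1 + ∑ j ∈ Finset.Ico 1 n, 1 / (2 ^ (j + 1) * β j)

/-- The truncated potential `φ = max{φ_n : 1 ≤ n ≤ N+1}`. -/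
def phiFin (α : ℝ) (c : ℕ → ℝ) (N : ℕ) (x : Bin) : ℝ :=
  ⨆ n : Fin (N + 1), phiN α c ((n : ℕ) + 1) x

/-! ### Measures of maximal entropy and relative pressure -/

/-- `μ` is a measure of maximal entropy for the subsystem `Y` (a `T`-invariant
probability measure giving full mass to `Y` and maximizing entropy among such). -/
def IsMaxEntropyOn (Y : Set Bin) (μ : Measure Bin) : Prop :=
  InvProb shift μ ∧ μ Y = 1 ∧
    ∀ ν : Measure Bin, InvProb shift ν → ν Y = 1 → kolSinai shift ν ≤ kolSinai shift μ

/-- The topological pressure of the subsystem `Y` (computed via the variational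
principle over invariant measures giving full mass to `Y`). -/
def pressureOn (Y : Set Bin) (φ : Bin → ℝ) : ℝ :=
  ⨆ μ : {μ : Measure Bin // InvProb shift μ ∧ μ Y = 1},
    (kolSinai shift μ.1 + ∫ x, φ x ∂μ.1)

/-! ### The pin-sequence space -/

/-- `Y`, the closure of the union of the `X_n`, `n ≥ 1`. -/
def Yset : Set Bin := closure (⋃ n : ℕ, Xsub (n + 1))

/-- The word `x_i ⋯ x_j` belongs to the language of `Y`. -/
def SegIn (x : Bin) (i j : ℤ) (Y : Set Bin) : Prop :=
  ∃ y ∈ Y, ∀ m : ℤ, i ≤ m → m ≤ j → y (m - i) = x m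

/-- The word `x_0 ⋯ x_{j-1}` belongs to the language of `Y`. -/
def WordIn (x : Bin) (j : ℕ) (Y : Set Bin) : Prop :=
  ∃ y ∈ Y, ∀ m : ℕ, m < j → y (m : ℤ) = x (m : ℤ)

/-- The pin-sequence space `P ⊆ X × {0,1}^ℤ`: pinless stretches of `x` lie in the
language of `Y`, and stretches between two pins do not. -/
def PinSpace : Set (Bin × Bin) :=
  {p | (∀ i j : ℤ, i < j → (∀ k : ℤ, i < k → k ≤ j → p.2 k = false) → SegIn p.1 i j Yset) ∧
       (∀ i j : ℤ, i < j → p.2 i = true → p.2 j = true → ¬ SegIn p.1 i j Yset)}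

/-- The product shift `T̄(x,z) = (Tx, Tz)`. -/
def shift2 (p : Bin × Bin) : Bin × Bin := (shift p.1, shift p.2)

/-- The set `A = {(x,z) ∈ P : z_0 = 1}`. -/
def Aset : Set (Bin × Bin) := {p | p ∈ PinSpace ∧ p.2 0 = true}

/-- The first return time to `A`. -/
def retTime (p : Bin × Bin) : ℕ :=
  sInf {k : ℕ | 1 ≤ k ∧ shift2^[k] p ∈ Aset}

/-- The induced (first-return) map `T̄_A`. -/
def inducedMap (p : Bin × Bin) : Bin × Bin := shift2^[retTime p] p

/-- `Q_j`, the set of points of `A` with first return time `j`. -/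
def Qset (j : ℕ) : Set (Bin × Bin) := {p | p ∈ Aset ∧ retTime p = j}

/-- `Q_{j,s}` for `1 ≤ s ≤ ⌊log₂ j⌋ - 3`: points of `Q_j` whose initial block of
length `j` lies in the language of `X_s`; the class `s = 0` collects the blocks
belonging to some `X_{s'}` with `s' ≥ ⌊log₂ j⌋ - 2`. -/
def Qjs (j s : ℕ) : Set (Bin × Bin) :=
  if s = 0 then
    {p | p ∈ Qset j ∧ ∃ s' : ℕ, 1 ≤ s' ∧ Nat.log 2 j - 2 ≤ s' ∧ WordIn p.1 j (Xsub s')}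
  else {p | p ∈ Qset j ∧ WordIn p.1 j (Xsub s)}


/-! ### Auxiliary lemmas for equicontinuity -/

lemma binDist_nonneg' (x y : Bin) : 0 ≤ binDist x y := by
  unfold binDist
  split
  · exact le_rfl
  · positivity

lemma half_pow_le_half_pow {m j : ℕ} : (1/2:ℝ)^m ≤ (1/2:ℝ)^j ↔ j ≤ m := by
  rw [one_div, inv_pow, inv_pow,
    inv_le_inv₀ (by positivity) (by positivity),
    pow_le_pow_iff_right₀ one_lt_two]

lemma binDist_le_iff (x y : Bin) (j : ℕ) :
    binDist x y ≤ (1/2:ℝ)^j ↔ ∀ i : ℤ, i.natAbs < j → x i = y i := by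
  classical
  unfold binDist
  split_ifs with h
  · constructor
    · intro _ i _; rw [h]
    · intro _; positivity
  · have hne : {m : ℕ | ∃ i : ℤ, i.natAbs = m ∧ x i ≠ y i}.Nonempty := by
      obtain ⟨i, hi⟩ := Function.ne_iff.mp h
      exact ⟨i.natAbs, i, rfl, hi⟩
    rw [half_pow_le_half_pow]
    constructor
    · intro hle i hij
      by_contra hxy
      have : sInf {m : ℕ | ∃ i : ℤ, i.natAbs = m ∧ x i ≠ y i} ≤ i.natAbs :=
        Nat.sInf_le ⟨i, rfl, hxy⟩
      omega
    · intro hag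
      by_contra hlt
      push_neg at hlt
      obtain ⟨i, hi, hxy⟩ := Nat.sInf_mem hne
      exact hxy (hag i (by omega))

lemma binDist_eq_of_agree {x y : Bin} {j : ℕ}
    (hag : ∀ i : ℤ, i.natAbs < j → x i = y i) (z : Bin)
    (hfar : ¬ binDist x z ≤ (1/2:ℝ)^j) : binDist y z = binDist x z := by
  classical
  have hxz : x ≠ z := by
    rintro rfl
    exact hfar (by unfold binDist; rw [if_pos rfl]; positivity)
  rw [binDist_le_iff] at hfar
  push_neg at hfar
  obtain ⟨i0, hi0, hne0⟩ := hfar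
  have hyz : y ≠ z := by
    rintro rfl
    exact hne0 (hag i0 hi0)
  have hSx : {m : ℕ | ∃ i : ℤ, i.natAbs = m ∧ x i ≠ z i}.Nonempty :=
    ⟨i0.natAbs, i0, rfl, hne0⟩
  have hSy : {m : ℕ | ∃ i : ℤ, i.natAbs = m ∧ y i ≠ z i}.Nonempty :=
    ⟨i0.natAbs, i0, rfl, fun hy => hne0 ((hag i0 hi0).trans hy)⟩
  have hx_lt : sInf {m : ℕ | ∃ i : ℤ, i.natAbs = m ∧ x i ≠ z i} < j :=
    lt_of_le_of_lt (Nat.sInf_le ⟨i0, rfl, hne0⟩) hi0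
  have hy_lt : sInf {m : ℕ | ∃ i : ℤ, i.natAbs = m ∧ y i ≠ z i} < j :=
    lt_of_le_of_lt (Nat.sInf_le ⟨i0, rfl, fun hy => hne0 ((hag i0 hi0).trans hy)⟩) hi0
  have heq : sInf {m : ℕ | ∃ i : ℤ, i.natAbs = m ∧ y i ≠ z i}
      = sInf {m : ℕ | ∃ i : ℤ, i.natAbs = m ∧ x i ≠ z i} := by
    apply le_antisymm
    · obtain ⟨i, hi, hne⟩ := Nat.sInf_mem hSx
      exact Nat.sInf_le ⟨i, hi, fun hy => hne ((hag i (by omega)).symm ▸ hy)⟩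
    · obtain ⟨i, hi, hne⟩ := Nat.sInf_mem hSy
      exact Nat.sInf_le ⟨i, hi, fun hx => hne ((hag i (by omega)) ▸ hx)⟩
  unfold binDist
  rw [if_neg hxz, if_neg hyz, heq]

lemma mainIneq {a b : ℝ} (ha : 1 ≤ a) (hab : a ≤ b) :
    (10 + 3 * Real.logb 2 b) / b ≤ (10 + 3 * Real.logb 2 a) / a := by
  have ha0 : (0:ℝ) < a := lt_of_lt_of_le one_pos ha
  have hb0 : (0:ℝ) < b := lt_of_lt_of_le ha0 hab
  rw [div_le_div_iff₀ hb0 ha0]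
  have hu0 : (0:ℝ) < b / a := by positivity
  have hu1 : (1:ℝ) ≤ b / a := (one_le_div ha0).mpr hab
  have hlog : Real.logb 2 b = Real.logb 2 a + Real.logb 2 (b / a) := by
    rw [← Real.logb_mul (ne_of_gt ha0) (ne_of_gt hu0)]
    congr 1
    field_simp
  have hla : 0 ≤ Real.logb 2 a := Real.logb_nonneg one_lt_two ha
  have hlu0 : 0 ≤ Real.log (b / a) := Real.log_nonneg hu1
  have hl2 : (0.6931471803 : ℝ) < Real.log 2 := Real.log_two_gt_d9
  have hsub : Real.log (b / a) ≤ b / a - 1 := Real.log_le_sub_one_of_pos hu0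
  have key : 3 * Real.logb 2 (b / a) ≤ 10 * (b / a - 1) := by
    have h2 : (0:ℝ) < Real.log 2 := Real.log_pos one_lt_two
    rw [Real.logb, ← mul_div_assoc, div_le_iff₀ h2]
    nlinarith [hlu0, hsub, hl2]
  have hba : a * (b / a) = b := by field_simp
  have key' : 3 * (a * Real.logb 2 (b / a)) ≤ 10 * b - 10 * a := by
    nlinarith [mul_le_mul_of_nonneg_left key (le_of_lt ha0), hba]
  rw [hlog]
  nlinarith [mul_nonneg (sub_nonneg.mpr hab) hla, key']

lemma deltaSeq_nonneg {α : ℝ} (hα : 0 < α) {j : ℕ} (hj : 1 ≤ j) :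
    0 ≤ deltaSeq α j := by
  unfold deltaSeq
  have h1 : (1:ℝ) ≤ (j:ℝ) := by exact_mod_cast hj
  have := Real.logb_nonneg (one_lt_two) h1
  have hjpos : (0:ℝ) < (j:ℝ) := by linarith
  apply div_nonneg (by linarith) (by positivity)

lemma deltaOf_bounds (α : ℝ) (hα : 0 < α) (j : ℕ) (hj : 1 ≤ j) {r : ℝ}
    (h0 : 0 ≤ r) (h1 : r ≤ (1/2:ℝ)^j) :
    0 ≤ deltaOf α r ∧ deltaOf α r ≤ deltaSeq α j := by
  rcases eq_or_lt_of_le h0 with h0' | h0'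
  · rw [deltaOf, if_pos h0'.symm]
    exact ⟨le_refl 0, deltaSeq_nonneg hα hj⟩
  · have hj1 : (1:ℝ) ≤ (j:ℝ) := by exact_mod_cast hj
    have hrle : Real.logb 2 r ≤ -(j:ℝ) := by
      have : Real.logb 2 r ≤ Real.logb 2 ((1/2:ℝ)^j) :=
        Real.logb_le_logb_of_le one_lt_two h0' h1
      rwa [one_div, Real.logb_pow, Real.logb_inv,
        Real.logb_self_eq_one one_lt_two, mul_neg, mul_one] at this
    set s : ℝ := -Real.logb 2 r with hs
    have hjs : (j:ℝ) ≤ s := by rw [hs]; linarith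
    have hs1 : (1:ℝ) ≤ s := le_trans hj1 hjs
    have hspos : (0:ℝ) < s := by linarith
    have hls : 0 ≤ Real.logb 2 s := Real.logb_nonneg one_lt_two hs1
    rw [deltaOf, if_neg (ne_of_gt h0')]
    constructor
    · apply div_nonneg (by linarith) (by positivity)
    · unfold deltaSeq
      have hM := mainIneq hj1 hjs
      have hjpos : (0:ℝ) < (j:ℝ) := by linarith
      calc (10 + 3 * Real.logb 2 s) / (α * s)
          = ((10 + 3 * Real.logb 2 s) / s) / α := by
            rw [div_div]; ring_nf
        _ ≤ ((10 + 3 * Real.logb 2 (j:ℝ)) / (j:ℝ)) / α := by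
            gcongr
        _ = (10 + 3 * Real.logb 2 (j:ℝ)) / (α * (j:ℝ)) := by
            rw [div_div]; ring_nf

/-- uniform equicontinuity of the family `{φ_n}`. -/
theorem phiN_equicontinuous (α : ℝ) (β : ℕ → ℝ) (hα : 0 < α) (hαβ : α < β 1)
    (hpos : ∀ n : ℕ, 1 ≤ n → 0 < β n)
    (hmono : ∀ m n : ℕ, 1 ≤ m → m < n → β m < β n)
    (n : ℕ) (hn : 1 ≤ n) (x y : Bin) (j : ℕ) (hj : 1 ≤ j)
    (hd : binDist x y ≤ (1 / 2 : ℝ) ^ j) :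
    |phiN α (cseq β) n x - phiN α (cseq β) n y| ≤ deltaSeq α j := by
  have hagree : ∀ i : ℤ, i.natAbs < j → x i = y i := (binDist_le_iff x y j).mp hd
  set S := Xsub n with hS
  have hbddx : BddBelow ((fun z => binDist x z) '' S) := by
    refine ⟨0, ?_⟩
    rintro r ⟨w, _, rfl⟩
    exact binDist_nonneg' x w
  have hbddy : BddBelow ((fun z => binDist y z) '' S) := by
    refine ⟨0, ?_⟩
    rintro r ⟨w, _, rfl⟩
    exact binDist_nonneg' y w
  have hdiff : phiN α (cseq β) n x - phiN α (cseq β) n y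
      = deltaOf α (distToSet y S) - deltaOf α (distToSet x S) := by
    simp only [phiN]; ring
  by_cases hcase : ∃ z ∈ S, binDist x z ≤ (1/2:ℝ)^j
  · obtain ⟨z, hz, hxz⟩ := hcase
    have hyz : binDist y z ≤ (1/2:ℝ)^j := by
      rw [binDist_le_iff]
      intro i hi
      rw [← hagree i hi]
      exact (binDist_le_iff x z j).mp hxz i hi
    have hdx0 : 0 ≤ distToSet x S :=
      Real.sInf_nonneg (by rintro r ⟨w, _, rfl⟩; exact binDist_nonneg' x w)
    have hdy0 : 0 ≤ distToSet y S :=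
      Real.sInf_nonneg (by rintro r ⟨w, _, rfl⟩; exact binDist_nonneg' y w)
    have hdx1 : distToSet x S ≤ (1/2:ℝ)^j :=
      le_trans (csInf_le hbddx ⟨z, hz, rfl⟩) hxz
    have hdy1 : distToSet y S ≤ (1/2:ℝ)^j :=
      le_trans (csInf_le hbddy ⟨z, hz, rfl⟩) hyz
    obtain ⟨h1, h2⟩ := deltaOf_bounds α hα j hj hdx0 hdx1
    obtain ⟨h3, h4⟩ := deltaOf_bounds α hα j hj hdy0 hdy1
    rw [hdiff, abs_le]
    constructor <;> linarith
  · push_neg at hcase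
    have himg : (fun z => binDist x z) '' S = (fun z => binDist y z) '' S :=
      Set.image_congr fun z hz =>
        (binDist_eq_of_agree hagree z (not_le.mpr (hcase z hz))).symm
    have : distToSet x S = distToSet y S := by
      unfold distToSet
      rw [himg]
    rw [hdiff, this, sub_self, abs_zero]
    exact deltaSeq_nonneg hα hj

end PhaseTransitions
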